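/- The 7-dimensional real Lie algebras g₅¹ ⊕ aff(ℝ) and g₅² ⊕ aff(ℝ) are not isomorphic, but their complexifications are isomorphic as complex Lie algebras. -/

import Mathlib

open Module
open scoped TensorProduct

/-!
`ad X₅` acts on `⟨X₁, X₂⟩` with eigenvalues `±1` in `g₅¹` and `±i` in `g₅²`, and this is the whole
difference. Over `ℝ` it is seen by the Killing form: on `g₅¹ ⊕ aff(ℝ)` it is the diagonal form
`6 x₄² + 2 x₅² + t²`, hence positive semidefinite, while on `g₅² ⊕ aff(ℝ)` it takes the value `−2`
at `X₅`. Over `ℂ` the vectors `X₁ + iX₂, X₁ − iX₂, −2iX₃, X₄, −iX₅, T, U` of the complexification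
of `g₅² ⊕ aff(ℝ)` satisfy the bracket relations of `g₅¹ ⊕ aff(ℝ)`.
-/

/-- Structure constants (for `i < j`) of `g₅¹`: `[X₁,X₂]=X₃`, `[X₄,X₁]=X₁`, `[X₄,X₂]=X₂`,
`[X₄,X₃]=2X₃`, `[X₅,X₁]=X₁`, `[X₅,X₂]=−X₂` (1-indexed), all other brackets zero. -/
def c51 (i j : Fin 5) : Fin 5 → ℝ :=
  if (i, j) = (0, 1) then ![0, 0, 1, 0, 0]
  else if (i, j) = (0, 3) then ![-1, 0, 0, 0, 0]
  else if (i, j) = (1, 3) then ![0, -1, 0, 0, 0]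
  else if (i, j) = (2, 3) then ![0, 0, -2, 0, 0]
  else if (i, j) = (0, 4) then ![-1, 0, 0, 0, 0]
  else if (i, j) = (1, 4) then ![0, 1, 0, 0, 0]
  else 0

/-- Structure constants (for `i < j`) of `g₅²`: `[X₁,X₂]=X₃`, `[X₄,X₁]=X₁`, `[X₄,X₂]=X₂`,
`[X₄,X₃]=2X₃`, `[X₅,X₁]=−X₂`, `[X₅,X₂]=X₁` (1-indexed), all other brackets zero. -/
def c52 (i j : Fin 5) : Fin 5 → ℝ :=
  if (i, j) = (0, 1) then ![0, 0, 1, 0, 0]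
  else if (i, j) = (0, 3) then ![-1, 0, 0, 0, 0]
  else if (i, j) = (1, 3) then ![0, -1, 0, 0, 0]
  else if (i, j) = (2, 3) then ![0, 0, -2, 0, 0]
  else if (i, j) = (0, 4) then ![0, 1, 0, 0, 0]
  else if (i, j) = (1, 4) then ![-1, 0, 0, 0, 0]
  else 0

section StructureConstants

variable {R L ι : Type*} [CommRing R] [LieRing L] [LieAlgebra R L] [Fintype ι]

def HasStructureConstants (v : ι → L) (S : ι → ι → ι → R) : Prop :=
  ∀ i j, ⁅v i, v j⁆ = ∑ k, S i j k • v k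

namespace HasStructureConstants

variable {S : ι → ι → ι → R}

theorem changeBasis {b : ι → L} {T : ι → ι → ι → R} (hb : HasStructureConstants b T)
    (P : Matrix ι ι R) (hP : ∀ i j m, ∑ k, S i j k * P k m = ∑ k, ∑ l, P i k * P j l * T k l m) :
    HasStructureConstants (fun i => ∑ k, P i k • b k) S := by
  intro i j
  calc ⁅∑ k, P i k • b k, ∑ l, P j l • b l⁆
      = ∑ k, ∑ l, ∑ m, (P i k * P j l * T k l m) • b m := by
        simp only [sum_lie_sum, smul_lie, lie_smul, hb _ _, Finset.smul_sum, smul_smul,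
          mul_assoc, mul_left_comm (P j _)]
    _ = ∑ m, (∑ k, ∑ l, P i k * P j l * T k l m) • b m := by
        simp only [Finset.sum_smul]
        exact Finset.sum_comm_cycle
    _ = ∑ m, (∑ k, S i j k * P k m) • b m := by simp only [hP]
    _ = ∑ k, S i j k • ∑ m, P k m • b m := by
        simp only [Finset.smul_sum, smul_smul, Finset.sum_smul]
        exact Finset.sum_comm

theorem baseChange (A : Type*) [CommRing A] [Algebra R A] {b : Basis ι R L}
    (hb : HasStructureConstants b S) :
    HasStructureConstants (b.baseChange A) (fun i j k => algebraMap R A (S i j k)) := by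
  intro i j
  simp only [Basis.baseChange_apply, LieAlgebra.ExtendScalars.bracket_tmul, one_mul, hb i j,
    TensorProduct.tmul_sum, TensorProduct.tmul_smul, algebraMap_smul]

theorem killingForm_apply [Free R L] [Module.Finite R L] [DecidableEq ι] {b : Basis ι R L}
    (hb : HasStructureConstants b S) (i j : ι) :
    killingForm R L (b i) (b j) = ∑ k, ∑ l, S j k l * S i l k := by
  rw [LieModule.traceForm_apply_apply, LinearMap.trace_eq_matrix_trace R b, Matrix.trace]
  refine Finset.sum_congr rfl fun k _ => ?_
  simp [LinearMap.toMatrix_apply, hb j k, hb i, Finsupp.single_apply]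

theorem nonempty_lieEquiv {L' : Type*} [LieRing L'] [LieAlgebra R L'] {b : Basis ι R L}
    {b' : Basis ι R L'} (hb : HasStructureConstants b S) (hb' : HasStructureConstants b' S) :
    Nonempty (L ≃ₗ⁅R⁆ L') := by
  let e := b.equiv b' (Equiv.refl ι)
  have he : ∀ i, e (b i) = b' i := fun i => b.equiv_apply i b' (Equiv.refl ι)
  have hbracket : ((LieAlgebra.ad R L' : L' →ₗ[R] Module.End R L') ∘ₗ (e : L →ₗ[R] L')).compl₂
      (e : L →ₗ[R] L') = (LieAlgebra.ad R L : L →ₗ[R] Module.End R L).compr₂ (e : L →ₗ[R] L') := by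
    refine LinearMap.ext_basis b b fun i j => ?_
    simp [he, hb i j, hb' i j]
  exact ⟨{ e with map_lie' := fun {x y} => (LinearMap.congr_fun₂ hbracket x y).symm }⟩

theorem exists_basis_of_matrix {b : Basis ι R L} {T : ι → ι → ι → R} [DecidableEq ι]
    (hb : HasStructureConstants b T) (P : Matrix ι ι R) (hdet : IsUnit P.det)
    (hP : ∀ i j m, ∑ k, S i j k * P k m = ∑ k, ∑ l, P i k * P j l * T k l m) :
    ∃ v : Basis ι R L, HasStructureConstants v S := by
  refine ⟨b.map (Matrix.toLinearEquiv b P.transpose (by rwa [Matrix.det_transpose])), ?_⟩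
  convert hb.changeBasis P hP using 2 with i
  simp

end HasStructureConstants

end StructureConstants

theorem LinearMap.BilinForm.apply_self_nonneg_of_diagonal {R M ι : Type*} [CommRing R]
    [LinearOrder R] [IsStrictOrderedRing R] [AddCommGroup M] [Module R M] [Fintype ι]
    [DecidableEq ι] {B : LinearMap.BilinForm R M} (b : Basis ι R M) (d : ι → R)
    (hB : ∀ i j, B (b i) (b j) = if i = j then d i else 0) (hd : ∀ i, 0 ≤ d i) (x : M) :
    0 ≤ B x x := by
  have hdiag : LinearMap.BilinForm.toMatrix b B = Matrix.diagonal d := by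
    ext i j
    rw [LinearMap.BilinForm.toMatrix_apply, hB, Matrix.diagonal_apply]
  rw [← Matrix.toBilin_toMatrix b B, hdiag, Matrix.toBilin_apply]
  refine Finset.sum_nonneg fun i _ => Finset.sum_nonneg fun j _ => ?_
  rw [Matrix.diagonal_apply]
  split_ifs with hij
  · subst hij
    rw [mul_right_comm]
    exact mul_nonneg (mul_self_nonneg _) (hd i)
  · simp

theorem isEmpty_lieEquiv_of_killingForm {R L L' : Type*} [CommRing R] [LinearOrder R]
    [LieRing L] [LieAlgebra R L] [Free R L] [Module.Finite R L]
    [LieRing L'] [LieAlgebra R L'] [Free R L'] [Module.Finite R L']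
    (hL : ∀ x : L, 0 ≤ killingForm R L x x) (y : L') (hy : killingForm R L' y y < 0) :
    IsEmpty (L ≃ₗ⁅R⁆ L') := by
  refine ⟨fun e => hy.not_ge ?_⟩
  simpa using hL (e.symm y)

section G5Aff

open Sum

/-- Integer copies of `c51` and `c52`, so that the finite identities below are checked by
`decide`. -/
def q51 (i j k : Fin 5) : ℤ :=
  if (i, j) = (0, 1) then ![0, 0, 1, 0, 0] k
  else if (i, j) = (0, 3) then ![-1, 0, 0, 0, 0] k
  else if (i, j) = (1, 3) then ![0, -1, 0, 0, 0] k
  else if (i, j) = (2, 3) then ![0, 0, -2, 0, 0] k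
  else if (i, j) = (0, 4) then ![-1, 0, 0, 0, 0] k
  else if (i, j) = (1, 4) then ![0, 1, 0, 0, 0] k
  else 0

def q52 (i j k : Fin 5) : ℤ :=
  if (i, j) = (0, 1) then ![0, 0, 1, 0, 0] k
  else if (i, j) = (0, 3) then ![-1, 0, 0, 0, 0] k
  else if (i, j) = (1, 3) then ![0, -1, 0, 0, 0] k
  else if (i, j) = (2, 3) then ![0, 0, -2, 0, 0] k
  else if (i, j) = (0, 4) then ![0, 1, 0, 0, 0] k
  else if (i, j) = (1, 4) then ![-1, 0, 0, 0, 0] k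
  else 0

theorem c51_eq_intCast : c51 = fun i j k => (q51 i j k : ℝ) := by
  funext i j k
  rw [q51, c51]
  simp only [apply_ite (fun f : Fin 5 → ℝ => f k), Pi.zero_apply]
  split_ifs <;> fin_cases k <;> norm_num

theorem c52_eq_intCast : c52 = fun i j k => (q52 i j k : ℝ) := by
  funext i j k
  rw [q52, c52]
  simp only [apply_ite (fun f : Fin 5 → ℝ => f k), Pi.zero_apply]
  split_ifs <;> fin_cases k <;> norm_num

def affTable (q : Fin 5 → Fin 5 → Fin 5 → ℤ) : Fin 5 ⊕ Bool → Fin 5 ⊕ Bool → Fin 5 ⊕ Bool → ℤ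
  | inl i, inl j, inl k => if i < j then q i j k else if j < i then -q j i k else 0
  | inr false, inr true, inr true => 1
  | inr true, inr false, inr true => -1
  | _, _, _ => 0

theorem hasStructureConstants_affTable {R L : Type*} [CommRing R] [LieRing L] [LieAlgebra R L]
    (b : Fin 5 ⊕ Bool → L) (q : Fin 5 → Fin 5 → Fin 5 → ℤ)
    (h : ∀ i j : Fin 5, i < j → ⁅b (inl i), b (inl j)⁆ = ∑ k, (q i j k : R) • b (inl k))
    (h' : ⁅b (inr false), b (inr true)⁆ = b (inr true))
    (h'' : ∀ (i : Fin 5) (x : Bool), ⁅b (inl i), b (inr x)⁆ = 0) :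
    HasStructureConstants b fun i j k => (affTable q i j k : R) := by
  rintro (i | x) (j | y) <;>
    simp only [Fintype.sum_sum_type, Fintype.sum_bool, affTable]
  · rcases lt_trichotomy i j with hij | rfl | hij
    · simp [h i j hij, hij]
    · simp
    · rw [← lie_skew, h j i hij]
      simp [hij, hij.not_gt, neg_smul]
  · simp [h'']
  · rw [← lie_skew, h'']
    simp
  · cases x <;> cases y <;> simp [h', ← lie_skew (b (inr true))]

def killingDiag51 : Fin 5 ⊕ Bool → ℤ := Sum.elim ![0, 0, 0, 6, 2] fun x => cond x 0 1

theorem affTable_q51_killing_eq_diag : ∀ i j,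
    ∑ k, ∑ l, affTable q51 j k l * affTable q51 i l k = if i = j then killingDiag51 i else 0 := by
  simp only [Fintype.sum_sum_type, Fin.sum_univ_five, Fintype.sum_bool]
  decide

theorem affTable_q52_killing_inl_four :
    ∑ k, ∑ l, affTable q52 (inl 4) k l * affTable q52 (inl 4) l k = -2 := by
  simp only [Fintype.sum_sum_type, Fin.sum_univ_five, Fintype.sum_bool]
  decide

variable {L : Type*} [LieRing L]

theorem killingForm_nonneg_of_q51 [LieAlgebra ℝ L] [Free ℝ L] [Module.Finite ℝ L]
    {b : Basis (Fin 5 ⊕ Bool) ℝ L}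
    (hb : HasStructureConstants b fun i j k => (affTable q51 i j k : ℝ)) (x : L) :
    0 ≤ killingForm ℝ L x x := by
  refine LinearMap.BilinForm.apply_self_nonneg_of_diagonal b (fun i => killingDiag51 i)
    (fun i j => ?_) (fun i => ?_) x
  · rw [hb.killingForm_apply]
    exact_mod_cast affTable_q51_killing_eq_diag i j
  · exact_mod_cast (by revert i; decide : ∀ i, 0 ≤ killingDiag51 i) i

theorem killingForm_inl_four_of_q52 [LieAlgebra ℝ L] [Free ℝ L] [Module.Finite ℝ L]
    {b : Basis (Fin 5 ⊕ Bool) ℝ L}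
    (hb : HasStructureConstants b fun i j k => (affTable q52 i j k : ℝ)) :
    killingForm ℝ L (b (inl 4)) (b (inl 4)) = -2 := by
  rw [hb.killingForm_apply]
  exact_mod_cast affTable_q52_killing_inl_four

open Zsqrtd in
/-- Row `i` holds the coordinates of the `i`-th new basis vector in terms of `X₁, …, X₅`. -/
def basisChangeBlock : Matrix (Fin 5) (Fin 5) GaussianInt :=
  !![1, sqrtd, 0, 0, 0; 1, -sqrtd, 0, 0, 0; 0, 0, -2 * sqrtd, 0, 0; 0, 0, 0, 1, 0;
    0, 0, 0, 0, -sqrtd]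

def basisChange : Matrix (Fin 5 ⊕ Bool) (Fin 5 ⊕ Bool) GaussianInt :=
  Matrix.fromBlocks basisChangeBlock 0 0 1

theorem basisChange_det : basisChange.det = ⟨0, 4⟩ := by
  rw [basisChange, Matrix.det_fromBlocks_zero₂₁, Matrix.det_one, mul_one, Matrix.det_succ_row_zero]
  decide

theorem affTable_q51_eq_changeBasis_q52 : ∀ i j m,
    ∑ k, (affTable q51 i j k : GaussianInt) * basisChange k m =
      ∑ k, ∑ l, basisChange i k * basisChange j l * affTable q52 k l m := by
  simp only [Fintype.sum_sum_type, Fin.sum_univ_five, Fintype.sum_bool]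
  decide +kernel

theorem exists_basis_q51_of_q52 [LieAlgebra ℂ L] {b : Basis (Fin 5 ⊕ Bool) ℂ L}
    (hb : HasStructureConstants b fun i j k => (affTable q52 i j k : ℂ)) :
    ∃ v : Basis (Fin 5 ⊕ Bool) ℂ L,
      HasStructureConstants v fun i j k => (affTable q51 i j k : ℂ) := by
  refine hb.exists_basis_of_matrix (basisChange.map GaussianInt.toComplex) ?_ fun i j m => ?_
  · rw [← RingHom.mapMatrix_apply, ← RingHom.map_det, basisChange_det, isUnit_iff_ne_zero,
      map_ne_zero_iff _ GaussianInt.toComplex_injective]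
    decide
  · simpa using congrArg GaussianInt.toComplex (affTable_q51_eq_changeBasis_q52 i j m)

end G5Aff

/-- `g₅¹ ⊕ aff(ℝ)` and `g₅² ⊕ aff(ℝ)`: bases indexed by `Fin 5 ⊕ Bool`, where `Sum.inl`
carries the `g₅ⁱ` relations, `Sum.inr false = T`, `Sum.inr true = U` with `⁅T, U⁆ = U`,
and the two summands commute. -/
theorem g51_aff_vs_g52_aff
    {g₁ : Type} [LieRing g₁] [LieAlgebra ℝ g₁] (b₁ : Basis (Fin 5 ⊕ Bool) ℝ g₁)
    (h₁ : ∀ i j : Fin 5, i < j →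
      ⁅b₁ (Sum.inl i), b₁ (Sum.inl j)⁆ = ∑ k, c51 i j k • b₁ (Sum.inl k))
    (h₁' : ⁅b₁ (Sum.inr false), b₁ (Sum.inr true)⁆ = b₁ (Sum.inr true))
    (h₁'' : ∀ (i : Fin 5) (x : Bool), ⁅b₁ (Sum.inl i), b₁ (Sum.inr x)⁆ = 0)
    {g₂ : Type} [LieRing g₂] [LieAlgebra ℝ g₂] (b₂ : Basis (Fin 5 ⊕ Bool) ℝ g₂)
    (h₂ : ∀ i j : Fin 5, i < j →
      ⁅b₂ (Sum.inl i), b₂ (Sum.inl j)⁆ = ∑ k, c52 i j k • b₂ (Sum.inl k))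
    (h₂' : ⁅b₂ (Sum.inr false), b₂ (Sum.inr true)⁆ = b₂ (Sum.inr true))
    (h₂'' : ∀ (i : Fin 5) (x : Bool), ⁅b₂ (Sum.inl i), b₂ (Sum.inr x)⁆ = 0) :
    IsEmpty (g₁ ≃ₗ⁅ℝ⁆ g₂) ∧ Nonempty ((ℂ ⊗[ℝ] g₁) ≃ₗ⁅ℂ⁆ (ℂ ⊗[ℝ] g₂)) := by
  have hb₁ :=
    hasStructureConstants_affTable b₁ q51 (by simpa only [c51_eq_intCast] using h₁) h₁' h₁''
  have hb₂ :=
    hasStructureConstants_affTable b₂ q52 (by simpa only [c52_eq_intCast] using h₂) h₂' h₂''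
  have := Free.of_basis b₁
  have := Free.of_basis b₂
  have := Module.Finite.of_basis b₁
  have := Module.Finite.of_basis b₂
  refine ⟨isEmpty_lieEquiv_of_killingForm (killingForm_nonneg_of_q51 hb₁) (b₂ (Sum.inl 4)) ?_, ?_⟩
  · rw [killingForm_inl_four_of_q52 hb₂]
    norm_num
  · obtain ⟨v, hv⟩ := exists_basis_q51_of_q52 (by simpa using hb₂.baseChange ℂ)
    exact (by simpa using hb₁.baseChange ℂ : HasStructureConstants _ _).nonempty_lieEquiv hv
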